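/- arXiv:0806.1364 — 4 statements merged into one kernel-verified Lean document; each statement's English description precedes it below -/
import Mathlib

section
/- Let K be a field with a non-archimedean absolute value and let Φ : K^{N+1} → K^{N+1} be a homogeneous map of degree d ≥ 2 that has nonsingular reduction, i.e., Φ has coefficients in K° and its reduction modulo the maximal ideal is nonvanishing on nonzero vectors of the (algebraic closure of the) residue field. Then ‖Φ(x)‖ = ‖x‖^d for all x ∈ K^{N+1}. -/
/-!
By homogeneity it suffices to treat `‖x‖ = 1`, after writing `x = c • y` with `‖c‖ = ‖x‖`.
The ultrametric inequality gives `‖Φ(y)‖ ≤ 1`. If every `|Φᵢ(y)|` were `< 1`, then the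
reduction of `y`, which is nonzero because some `|yⱼ| = 1`, would be a common zero of the
reduced forms, contradicting nonsingular reduction.
-/

open MvPolynomial

/-- The valuation ring `K° = {a : ‖a‖ ≤ 1}` of a non-archimedean field, as a subring. -/
def unitBallSubring (K : Type*) [NormedField K] [IsUltrametricDist K] : Subring K where
  carrier := {a : K | ‖a‖ ≤ 1}
  mul_mem' := by
    intro a b ha hb
    simp only [Set.mem_setOf_eq] at *
    calc ‖a * b‖ = ‖a‖ * ‖b‖ := norm_mul a b
    _ ≤ 1 * 1 := mul_le_mul ha hb (norm_nonneg b) zero_le_one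
    _ = 1 := one_mul 1
  one_mem' := by simp
  add_mem' := by
    intro a b ha hb
    simp only [Set.mem_setOf_eq] at *
    exact (IsUltrametricDist.norm_add_le_max a b).trans (max_le ha hb)
  zero_mem' := by simp
  neg_mem' := by
    intro a ha
    simpa using ha

namespace MvPolynomial.IsHomogeneous

variable {σ : Type*} {n : ℕ}

theorem eval_smul {R : Type*} [CommSemiring R] {p : MvPolynomial σ R} (hp : p.IsHomogeneous n)
    (c : R) (x : σ → R) : eval (c • x) p = c ^ n * eval x p := by
  rw [eval_eq, eval_eq, Finset.mul_sum]
  refine Finset.sum_congr rfl fun m hm => ?_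
  simp only [Pi.smul_apply, smul_eq_mul, mul_pow, Finset.prod_mul_distrib,
    Finset.prod_pow_eq_pow_sum, ← hp.degree_eq_sum_deg_support hm]
  ring

theorem norm_eval_le {K : Type*} [NormedField K] [IsUltrametricDist K] [Fintype σ]
    {p : MvPolynomial σ K} (hp : p.IsHomogeneous n) (hc : ∀ m, ‖p.coeff m‖ ≤ 1) (x : σ → K) :
    ‖eval x p‖ ≤ ‖x‖ ^ n := by
  rw [eval_eq]
  refine IsUltrametricDist.norm_sum_le_of_forall_le_of_nonneg (by positivity) fun m hm => ?_
  calc ‖p.coeff m * ∏ j ∈ m.support, x j ^ m j‖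
      ≤ 1 * ∏ j ∈ m.support, ‖x‖ ^ m j := by
        rw [norm_mul, norm_prod]
        gcongr with j
        · exact hc m
        · rw [norm_pow]
          exact pow_le_pow_left₀ (norm_nonneg _) (norm_le_pi_norm x j) _
    _ = ‖x‖ ^ n := by
        rw [one_mul, Finset.prod_pow_eq_pow_sum, ← hp.degree_eq_sum_deg_support hm]

end MvPolynomial.IsHomogeneous

theorem Pi.exists_norm_eq {ι E : Type*} [Fintype ι] [Nonempty ι] [SeminormedAddCommGroup E]
    (x : ι → E) : ∃ i, ‖x i‖ = ‖x‖ := by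
  obtain ⟨i, -, hi⟩ := Finset.exists_mem_eq_sup Finset.univ Finset.univ_nonempty fun i => ‖x i‖₊
  exact ⟨i, by rw [Pi.norm_def, hi, coe_nnnorm]⟩

theorem Pi.exists_norm_one_smul_eq {ι K : Type*} [Fintype ι] [Nonempty ι] [NormedField K]
    (x : ι → K) : ∃ (c : K) (y : ι → K), ‖c‖ = ‖x‖ ∧ ‖y‖ = 1 ∧ c • y = x := by
  rcases eq_or_ne x 0 with rfl | hx
  · exact ⟨0, fun _ => 1, by simp, by simp, zero_smul K _⟩
  obtain ⟨j, hj⟩ := Pi.exists_norm_eq x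
  have hxj : x j ≠ 0 := norm_ne_zero_iff.1 (hj ▸ norm_ne_zero_iff.2 hx)
  refine ⟨x j, (x j)⁻¹ • x, hj, ?_, smul_inv_smul₀ hxj x⟩
  rw [norm_smul, norm_inv, hj, inv_mul_cancel₀ (norm_ne_zero_iff.2 hx)]

section Reduction

variable {K : Type*} [NormedField K] [IsUltrametricDist K] {σ R : Type*} [CommRing R]
  (ρ : unitBallSubring K →+* R)

theorem reduction_eval_eq_zero_iff (hker : ∀ a : unitBallSubring K, ρ a = 0 ↔ ‖(a : K)‖ < 1)
    (p : MvPolynomial σ K) (hc : ∀ m, p.coeff m ∈ unitBallSubring K) {y : σ → K}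
    (hy : ∀ j, y j ∈ unitBallSubring K) :
    ∑ m ∈ p.support, ρ ⟨p.coeff m, hc m⟩ * (m.prod fun j e => ρ ⟨y j, hy j⟩ ^ e) = 0 ↔
      ‖eval y p‖ < 1 := by
  set S : unitBallSubring K :=
    ∑ m ∈ p.support, ⟨p.coeff m, hc m⟩ * m.prod fun j e => ⟨y j, hy j⟩ ^ e
  have hS : (S : K) = eval y p := by
    simp only [S, eval_eq, Finsupp.prod, AddSubmonoidClass.coe_finsetSum, Subring.coe_mul,
      SubmonoidClass.coe_finsetProd, SubmonoidClass.coe_pow]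
  have hρS : ρ S = ∑ m ∈ p.support, ρ ⟨p.coeff m, hc m⟩ * m.prod fun j e => ρ ⟨y j, hy j⟩ ^ e := by
    simp only [S, map_sum, map_mul, map_finsuppProd, map_pow]
  rw [← hρS, hker, hS]

theorem norm_eval_eq_one_of_norm_eq_one {ι : Type*} [Fintype ι] [Fintype σ] [Nonempty σ]
    {Φ : ι → MvPolynomial σ K} {d : ℕ} (hhom : ∀ i, (Φ i).IsHomogeneous d)
    (hcoeff : ∀ i m, (Φ i).coeff m ∈ unitBallSubring K)
    (hker : ∀ a : unitBallSubring K, ρ a = 0 ↔ ‖(a : K)‖ < 1)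
    (hns : ∀ Y : σ → R, Y ≠ 0 → ∃ i,
      (∑ m ∈ (Φ i).support, ρ ⟨(Φ i).coeff m, hcoeff i m⟩ * (m.prod fun j e => Y j ^ e)) ≠ 0)
    {y : σ → K} (hy : ‖y‖ = 1) :
    ‖fun i => eval y (Φ i)‖ = 1 := by
  have hy_mem : ∀ j, y j ∈ unitBallSubring K := fun j => (norm_le_pi_norm y j).trans hy.le
  obtain ⟨j, hj⟩ := Pi.exists_norm_eq y
  have hY : (fun j => ρ ⟨y j, hy_mem j⟩) ≠ 0 := fun h => by
    have := (hker _).1 (congrFun h j)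
    simp only [hj, hy, lt_irrefl] at this
  obtain ⟨i, hi⟩ := hns _ hY
  rw [Ne, reduction_eval_eq_zero_iff ρ hker (Φ i) (hcoeff i) hy_mem, not_lt] at hi
  have hle : ∀ k, ‖eval y (Φ k)‖ ≤ 1 := fun k => by
    simpa [hy] using (hhom k).norm_eval_le (hcoeff k) y
  exact le_antisymm ((pi_norm_le_iff_of_nonneg zero_le_one).2 hle)
    (hi.trans (norm_le_pi_norm (fun k => eval y (Φ k)) i))

end Reduction

theorem stmt_2_general {K : Type*} [NormedField K] [IsUltrametricDist K] {N d : ℕ}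
    (Φ : Fin (N + 1) → MvPolynomial (Fin (N + 1)) K)
    (hhom : ∀ i, (Φ i).IsHomogeneous d)
    (hcoeff : ∀ i m, (Φ i).coeff m ∈ unitBallSubring K)
    (kbar : Type*) [Field kbar]
    (ρ : unitBallSubring K →+* kbar)
    (hker : ∀ a : unitBallSubring K, ρ a = 0 ↔ ‖(a : K)‖ < 1)
    (hns : ∀ y : Fin (N + 1) → kbar, y ≠ 0 → ∃ i,
      (∑ m ∈ (Φ i).support, ρ ⟨(Φ i).coeff m, hcoeff i m⟩ * (m.prod fun j e => y j ^ e)) ≠ 0)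
    (x : Fin (N + 1) → K) :
    ‖(fun i => eval x (Φ i))‖ = ‖x‖ ^ d := by
  obtain ⟨c, y, hc, hy, rfl⟩ := Pi.exists_norm_one_smul_eq x
  have hΦ : (fun i => eval (c • y) (Φ i)) = c ^ d • fun i => eval y (Φ i) :=
    funext fun i => (hhom i).eval_smul c y
  rw [hΦ, norm_smul, norm_pow, hc, norm_eval_eq_one_of_norm_eq_one ρ hhom hcoeff hker hns hy,
    mul_one]

/-- Let `K` be a field with a non-archimedean absolute value, and let `Φ` be given by `N+1`
homogeneous forms of degree `d ≥ 2` with coefficients in the valuation ring `K°`.  Suppose `Φ`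
has nonsingular reduction: for any algebraically closed field `kbar` receiving the residue field
of `K` (i.e. a ring hom `ρ : K° → kbar` whose kernel is the maximal ideal `{a : ‖a‖ < 1}`), the
reduced map `Φ~` is nonvanishing at every nonzero vector of `kbar^{N+1}`.  Then
`‖Φ(x)‖ = ‖x‖^d` for all `x ∈ K^{N+1}`. -/
theorem stmt_2 {K : Type*} [NormedField K] [IsUltrametricDist K] {N d : ℕ} (hd : 2 ≤ d)
    (Φ : Fin (N + 1) → MvPolynomial (Fin (N + 1)) K)
    (hhom : ∀ i, (Φ i).IsHomogeneous d)
    (hcoeff : ∀ i m, (Φ i).coeff m ∈ unitBallSubring K)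
    (kbar : Type*) [Field kbar] [IsAlgClosed kbar]
    (ρ : unitBallSubring K →+* kbar)
    (hker : ∀ a : unitBallSubring K, ρ a = 0 ↔ ‖(a : K)‖ < 1)
    (hns : ∀ y : Fin (N + 1) → kbar, y ≠ 0 → ∃ i,
      (∑ m ∈ (Φ i).support, ρ ⟨(Φ i).coeff m, hcoeff i m⟩ * (m.prod fun j e => y j ^ e)) ≠ 0)
    (x : Fin (N + 1) → K) :
    ‖(fun i => eval x (Φ i))‖ = ‖x‖ ^ d :=
  stmt_2_general Φ hhom hcoeff kbar ρ hker hns x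
end

section
/- Let Φ : K^{N+1} → K^{N+1} be a nonsingular homogeneous map of degree d ≥ 2 over a non-archimedean field K. Then the homogeneous filled Julia set F_Φ = {x ∈ K^{N+1} : sup_{ℓ≥1} ‖Φ^ℓ(x)‖ < ∞} equals the sublevel set {x ∈ K^{N+1} : Ĥ_Φ(x) ≤ 0}, where Ĥ_Φ(x) = lim_ℓ d^{-ℓ} log ‖Φ^ℓ(x)‖ (with Ĥ_Φ(0) = -∞). -/
/-!
Since `log ‖Φ y‖ ≥ d log ‖y‖ + log C₁`, the shifted sequence
`d^{-ℓ} (log ‖Φ^ℓ x‖ + log C₁ / (d - 1))` is nondecreasing, hence bounded above by its limit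
`Ĥ_Φ(x)`; when `Ĥ_Φ(x) ≤ 0` this bounds the orbit by `C₁^{-1/(d-1)}`. Conversely, along a
bounded orbit `d^{-ℓ} log ‖Φ^ℓ x‖ ≤ d^{-ℓ} B → 0`.
-/

open Filter Topology Real

lemma monotone_div_pow_of_mul_le_succ {v : ℕ → ℝ} {D : ℝ} (hD : 0 < D)
    (hv : ∀ k, D * v k ≤ v (k + 1)) : Monotone fun k => v k / D ^ k := by
  refine monotone_nat_of_le_succ fun k => ?_
  rw [div_le_div_iff₀ (pow_pos hD k) (pow_pos hD (k + 1))]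
  calc v k * D ^ (k + 1) = D * v k * D ^ k := by ring
    _ ≤ v (k + 1) * D ^ k := by gcongr; exact hv k

lemma nonpos_of_tendsto_div_pow_of_le {u : ℕ → ℝ} {D h B : ℝ} (hD : 1 < D)
    (hlim : Tendsto (fun k => u k / D ^ k) atTop (𝓝 h)) (hB : ∀ᶠ k in atTop, u k ≤ B) :
    h ≤ 0 :=
  le_of_tendsto_of_tendsto hlim
    (tendsto_const_nhds.div_atTop (tendsto_pow_atTop_atTop_of_one_lt hD))
    (hB.mono fun k hk => div_le_div_of_nonneg_right hk (pow_pos (zero_lt_one.trans hD) k).le)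

lemma le_neg_div_sub_one_of_tendsto_div_pow_nonpos {u : ℕ → ℝ} {c D h : ℝ} (hD : 1 < D)
    (hstep : ∀ k, c + D * u k ≤ u (k + 1))
    (hlim : Tendsto (fun k => u k / D ^ k) atTop (𝓝 h)) (hh : h ≤ 0) (k : ℕ) :
    u k ≤ -c / (D - 1) := by
  have hD0 : 0 < D := zero_lt_one.trans hD
  set v : ℕ → ℝ := fun k => u k + c / (D - 1)
  have hshift : D * (c / (D - 1)) = c + c / (D - 1) := by
    field_simp [(sub_pos.2 hD).ne']
    ring
  have hv : ∀ k, D * v k ≤ v (k + 1) := fun k => by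
    simp only [v, mul_add, hshift]
    linarith [hstep k]
  have hvlim : Tendsto (fun k => v k / D ^ k) atTop (𝓝 h) := by
    have herr := (tendsto_const_nhds (x := c / (D - 1))).div_atTop
      (tendsto_pow_atTop_atTop_of_one_lt hD)
    simpa only [v, add_div, add_zero] using hlim.add herr
  have hvk : v k / D ^ k ≤ 0 :=
    ((monotone_div_pow_of_mul_le_succ hD0 hv).ge_of_tendsto hvlim k).trans hh
  have : u k + c / (D - 1) ≤ 0 := by
    simpa [v] using (div_le_iff₀ (pow_pos hD0 k)).1 hvk
  rw [neg_div]
  linarith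

section Orbit

variable {E : Type*} [Norm E] {f : E → E} {C : ℝ} {d : ℕ}

lemma norm_iterate_pos (hC : 0 < C) (hf : ∀ x, C * ‖x‖ ^ d ≤ ‖f x‖) {x : E} (hx : 0 < ‖x‖)
    (k : ℕ) : 0 < ‖f^[k] x‖ :=
  Function.Iterate.rec (fun y => 0 < ‖y‖) hx
    (fun y hy => (mul_pos hC (pow_pos hy d)).trans_le (hf y)) k

lemma log_norm_iterate_succ_ge (hC : 0 < C) (hf : ∀ x, C * ‖x‖ ^ d ≤ ‖f x‖) {x : E}
    (hx : 0 < ‖x‖) (k : ℕ) :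
    log C + d * log ‖f^[k] x‖ ≤ log ‖f^[k + 1] x‖ := by
  have hpos := norm_iterate_pos hC hf hx k
  rw [Function.iterate_succ_apply', ← log_pow, ← log_mul hC.ne' (pow_pos hpos d).ne']
  exact log_le_log (mul_pos hC (pow_pos hpos d)) (hf _)

lemma norm_iterate_le_of_tendsto_nonpos (hd : 1 < d) (hC : 0 < C)
    (hf : ∀ x, C * ‖x‖ ^ d ≤ ‖f x‖) {x : E} (hx : 0 < ‖x‖) {h : ℝ}
    (hlim : Tendsto (fun k => log ‖f^[k] x‖ / (d : ℝ) ^ k) atTop (𝓝 h)) (hh : h ≤ 0) (k : ℕ) :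
    ‖f^[k] x‖ ≤ exp (-log C / (d - 1)) := by
  rw [← exp_log (norm_iterate_pos hC hf hx k), exp_le_exp]
  exact le_neg_div_sub_one_of_tendsto_div_pow_nonpos (by exact_mod_cast hd)
    (log_norm_iterate_succ_ge hC hf hx) hlim hh k

end Orbit

theorem stmt_6_general {K : Type*} [NormedField K] {N d : ℕ} (hd : 2 ≤ d)
    (Φ : (Fin (N + 1) → K) → (Fin (N + 1) → K))
    (hhom : ∀ (a : K) (x), Φ (a • x) = a ^ d • Φ x)
    (C₁ : ℝ) (hC₁ : 0 < C₁)
    (hlow : ∀ x, C₁ * ‖x‖ ^ d ≤ ‖Φ x‖)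
    (H : (Fin (N + 1) → K) → ℝ)
    (hH : ∀ x, x ≠ 0 →
      Tendsto (fun ℓ : ℕ => (1 / (d : ℝ) ^ ℓ) * Real.log ‖Φ^[ℓ] x‖) atTop (nhds (H x))) :
    {x : Fin (N + 1) → K | ∃ B : ℝ, ∀ ℓ : ℕ, 1 ≤ ℓ → ‖Φ^[ℓ] x‖ ≤ B}
      = {x : Fin (N + 1) → K | x = 0 ∨ H x ≤ 0} := by
  have hΦ0 : Φ 0 = 0 := by
    simpa [zero_pow (by omega : d ≠ 0)] using hhom 0 0
  ext x
  rcases eq_or_ne x 0 with rfl | hx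
  · simpa [Function.iterate_fixed hΦ0] using ⟨0, fun _ _ => le_rfl⟩
  have hlim := hH x hx
  simp only [one_div_mul_eq_div] at hlim
  simp only [Set.mem_ofPred_eq, hx, false_or]
  constructor
  · rintro ⟨B, hB⟩
    exact nonpos_of_tendsto_div_pow_of_le (by exact_mod_cast hd) hlim
      ((eventually_ge_atTop 1).mono fun ℓ hℓ => (log_le_self (norm_nonneg _)).trans (hB ℓ hℓ))
  · intro hHx
    exact ⟨_, fun ℓ _ =>
      norm_iterate_le_of_tendsto_nonpos hd hC₁ hlow (norm_pos_iff.2 hx) hlim hHx ℓ⟩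

/-- Let `Φ : K^{N+1} → K^{N+1}` be a nonsingular homogeneous map of degree `d ≥ 2` over a
non-archimedean field `K` (with bounds `C₁‖x‖^d ≤ ‖Φ(x)‖ ≤ C₂‖x‖^d` guaranteeing the
homogeneous local height `Ĥ_Φ(x) = lim_ℓ d^{-ℓ} log ‖Φ^ℓ(x)‖` exists for nonzero `x`).
Then the homogeneous filled Julia set `F_Φ = {x : sup_{ℓ≥1} ‖Φ^ℓ(x)‖ < ∞}` equals the
sublevel set `{x : Ĥ_Φ(x) ≤ 0}` (where `Ĥ_Φ(0) = -∞`, i.e. `0` belongs to both sets). -/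
theorem stmt_6 {K : Type*} [NormedField K] [IsUltrametricDist K] {N d : ℕ} (hd : 2 ≤ d)
    (Φ : (Fin (N + 1) → K) → (Fin (N + 1) → K))
    (hhom : ∀ (a : K) (x), Φ (a • x) = a ^ d • Φ x)
    (hns : ∀ x, x ≠ 0 → Φ x ≠ 0)
    (C₁ C₂ : ℝ) (hC₁ : 0 < C₁) (hC₂ : 0 < C₂)
    (hlow : ∀ x, C₁ * ‖x‖ ^ d ≤ ‖Φ x‖)
    (hup : ∀ x, ‖Φ x‖ ≤ C₂ * ‖x‖ ^ d)
    (H : (Fin (N + 1) → K) → ℝ)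
    (hH : ∀ x, x ≠ 0 →
      Tendsto (fun ℓ : ℕ => (1 / (d : ℝ) ^ ℓ) * Real.log ‖Φ^[ℓ] x‖) atTop (nhds (H x))) :
    {x : Fin (N + 1) → K | ∃ B : ℝ, ∀ ℓ : ℕ, 1 ≤ ℓ → ‖Φ^[ℓ] x‖ ≤ B}
      = {x : Fin (N + 1) → K | x = 0 ∨ H x ≤ 0} :=
  stmt_6_general hd Φ hhom C₁ hC₁ hlow H hH
end

section
/- Let K be a field with a non-archimedean absolute value and E an infinite bounded subset of K^{N+1}. For M ≥ N+1, define d_M(E) = sup over M-element subsets S of E of |Δ(S)|^{1/C(M,N+1)}, where Δ(S) is the product over all (N+1)-element subsets S_j of S of the determinant of the matrix with columns the elements of S_j, and C(M,N+1) is the binomial coefficient. Then the sequence M ↦ d_M(E) is monotone decreasing, so the limit d_∞(E) = lim_{M→∞} d_M(E) exists. -/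
open scoped Classical in
/-- `Δ(s)` for a tuple `s` of `M` vectors in `K^{N+1}`: the product, over all
`(N+1)`-element subsets of the tuple (enumerated by strictly monotone index maps),
of the absolute value of the determinant of the matrix whose columns are these vectors.
(Taking absolute values makes the sign ambiguity irrelevant.) -/
noncomputable def absVandermonde {K : Type*} [NormedField K] {N M : ℕ}
    (s : Fin M → (Fin (N + 1) → K)) : ℝ :=
  ∏ t ∈ Finset.univ.filter (fun t : Fin (N + 1) → Fin M => StrictMono t),
    ‖(Matrix.of fun i j => s (t j) i).det‖

/-- The `M`-diameter `d_M(E)` of a set `E ⊆ K^{N+1}`: the supremum of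
`|Δ(S)|^(1/binom(M,N+1))` over all `M`-element subsets `S` of `E` (given by injective
`M`-tuples of elements of `E`); the exponent is the real number `(M.choose (N+1))⁻¹`. -/
noncomputable def mDiameter {K : Type*} [NormedField K] {N : ℕ}
    (E : Set (Fin (N + 1) → K)) (M : ℕ) : ℝ :=
  sSup {r : ℝ | ∃ s : Fin M → (Fin (N + 1) → K),
    Function.Injective s ∧ (∀ i, s i ∈ E) ∧
      r = absVandermonde s ^ ((M.choose (N + 1) : ℝ)⁻¹)}

/-!
Deleting the `m`-th point of an `(M+1)`-tuple `S` leaves an `M`-tuple, and each `(N+1)`-subset of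
`S` survives exactly `M - N` of these deletions, so `∏ₘ |Δ(S ∖ xₘ)| = |Δ(S)|^(M-N)`. Bounding each
factor by `d_M^C(M,N+1)` and using `C(M,N+1) (M+1) = C(M+1,N+1) (M-N)` gives
`|Δ(S)| ≤ d_M^C(M+1,N+1)`, i.e. `d_{M+1} ≤ d_M`. The Leibniz-formula bound
`|det| ≤ (N+1)! C^(N+1)` makes the suprema finite, and an eventually decreasing sequence of
nonnegative reals converges.
-/

open Finset

lemma card_filter_strictMono_fin (k n : ℕ) :
    #(univ.filter fun t : Fin k → Fin n => StrictMono t) = n.choose k := by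
  calc _ = #(powersetCard k (univ : Finset (Fin n))) := ?_
    _ = n.choose k := by simp
  refine card_bij (fun t _ => univ.image t) (fun t ht => ?_) (fun t ht t' ht' h => ?_)
    (fun T hT => ?_)
  · have ht : StrictMono t := (mem_filter.mp ht).2
    simp [mem_powersetCard, card_image_of_injective _ ht.injective]
  · have h : Set.range t = Set.range t' := by
      simpa using congrArg (fun s : Finset (Fin n) => (s : Set (Fin n))) h
    exact (StrictMono.range_inj (mem_filter.mp ht).2 (mem_filter.mp ht').2).1 h
  · have hT : #T = k := (mem_powersetCard.mp hT).2
    exact ⟨T.orderEmbOfFin hT, by simp [(T.orderEmbOfFin hT).strictMono],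
      coe_injective (by simp)⟩

lemma prod_filter_strictMono_comp_succAbove {β : Type*} [CommMonoid β] {k n : ℕ}
    (m : Fin (n + 1)) (f : (Fin k → Fin (n + 1)) → β) :
    ∏ t ∈ univ.filter (fun t : Fin k → Fin n => StrictMono t), f (m.succAbove ∘ t) =
      ∏ u ∈ univ.filter (fun u : Fin k → Fin (n + 1) => StrictMono u ∧ ∀ j, u j ≠ m),
        f u := by
  refine prod_bij (fun t _ => m.succAbove ∘ t) (fun t ht => ?_)
    (fun t _ t' _ h => funext fun j => Fin.succAbove_right_injective (congrFun h j))
    (fun u hu => ?_) (fun _ _ => rfl)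
  · have ht : StrictMono t := (mem_filter.mp ht).2
    simp [(Fin.strictMono_succAbove m).comp ht, Fin.succAbove_ne]
  · obtain ⟨hu, hm⟩ := (mem_filter.mp hu).2
    choose t ht using fun j => Fin.exists_succAbove_eq (hm j)
    refine ⟨t, mem_filter.mpr ⟨mem_univ _, fun i j hij => ?_⟩, funext ht⟩
    rw [← (Fin.strictMono_succAbove m).lt_iff_lt, ht, ht]
    exact hu hij

-- Each strictly monotone `u : Fin k → Fin (n + 1)` misses exactly `n + 1 - k` points `m`.
lemma prod_prod_filter_strictMono_comp_succAbove {β : Type*} [CommMonoid β] {k n : ℕ}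
    (f : (Fin k → Fin (n + 1)) → β) :
    ∏ m : Fin (n + 1), ∏ t ∈ univ.filter (fun t : Fin k → Fin n => StrictMono t),
        f (m.succAbove ∘ t) =
      ∏ u ∈ univ.filter (fun u : Fin k → Fin (n + 1) => StrictMono u), f u ^ (n + 1 - k) := by
  simp_rw [prod_filter_strictMono_comp_succAbove]
  rw [prod_comm' (t' := univ.filter fun u : Fin k → Fin (n + 1) => StrictMono u)
    (s' := fun u => univ.filter fun m => ∀ j, u j ≠ m) (by simp [and_comm])]
  refine prod_congr rfl fun u hu => ?_
  have hmissed : (univ.filter fun m => ∀ j, u j ≠ m) = (univ.image u)ᶜ := by ext; simp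
  rw [prod_const, hmissed, card_compl, card_image_of_injective _ (mem_filter.mp hu).2.injective]
  simp

section absVandermonde

variable {K : Type*} [NormedField K] {N M : ℕ}

lemma absVandermonde_nonneg (s : Fin M → Fin (N + 1) → K) : 0 ≤ absVandermonde s :=
  prod_nonneg fun _ _ => norm_nonneg _

lemma absVandermonde_le_of_norm_le {s : Fin M → Fin (N + 1) → K} {C : ℝ}
    (hs : ∀ i, ‖s i‖ ≤ C) :
    absVandermonde s ≤ ((N + 1).factorial * C ^ (N + 1)) ^ M.choose (N + 1) := by
  rw [absVandermonde, ← card_filter_strictMono_fin, ← prod_const]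
  refine prod_le_prod (fun _ _ => norm_nonneg _) fun t _ => ?_
  have hdet := Matrix.det_le (abv := NormedField.toAbsoluteValue K)
    (A := Matrix.of fun i j => s (t j) i) fun i j => (norm_le_pi_norm (s (t j)) i).trans (hs _)
  rw [Fintype.card_fin, nsmul_eq_mul] at hdet
  exact hdet

lemma prod_absVandermonde_comp_succAbove (s : Fin (M + 1) → Fin (N + 1) → K) :
    ∏ m : Fin (M + 1), absVandermonde (s ∘ m.succAbove) = absVandermonde s ^ (M - N) := by
  rw [absVandermonde, ← prod_pow, ← Nat.add_sub_add_right M 1 N]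
  exact prod_prod_filter_strictMono_comp_succAbove fun u => ‖(Matrix.of fun i j => s (u j) i).det‖

end absVandermonde

section mDiameter

variable {K : Type*} [NormedField K] {N M : ℕ} {E : Set (Fin (N + 1) → K)}

lemma mDiameter_nonneg (E : Set (Fin (N + 1) → K)) (M : ℕ) : 0 ≤ mDiameter E M :=
  Real.sSup_nonneg <| by
    rintro _ ⟨s, -, -, rfl⟩
    exact Real.rpow_nonneg (absVandermonde_nonneg s) _

lemma rpow_absVandermonde_le_mDiameter {B : ℝ} (hB : ∀ x ∈ E, ‖x‖ ≤ B) (hM : N + 1 ≤ M)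
    {s : Fin M → Fin (N + 1) → K} (hs : Function.Injective s) (hsE : ∀ i, s i ∈ E) :
    absVandermonde s ^ ((M.choose (N + 1) : ℝ)⁻¹) ≤ mDiameter E M := by
  refine le_csSup ⟨(N + 1).factorial * B ^ (N + 1), ?_⟩ ⟨s, hs, hsE, rfl⟩
  rintro _ ⟨s', -, hs'E, rfl⟩
  have hB0 : 0 ≤ B := (norm_nonneg _).trans (hB _ (hs'E ⟨0, by omega⟩))
  rw [Real.rpow_inv_le_iff_of_pos (absVandermonde_nonneg _) (by positivity)
    (Nat.cast_pos.mpr (Nat.choose_pos hM)), Real.rpow_natCast]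
  exact absVandermonde_le_of_norm_le fun i => hB _ (hs'E i)

lemma absVandermonde_le_mDiameter_pow {B : ℝ} (hB : ∀ x ∈ E, ‖x‖ ≤ B) (hM : N + 1 ≤ M)
    {s : Fin M → Fin (N + 1) → K} (hs : Function.Injective s) (hsE : ∀ i, s i ∈ E) :
    absVandermonde s ≤ mDiameter E M ^ M.choose (N + 1) := by
  rw [← Real.rpow_natCast, ← Real.rpow_inv_le_iff_of_pos (absVandermonde_nonneg _)
    (mDiameter_nonneg E M) (Nat.cast_pos.mpr (Nat.choose_pos hM))]
  exact rpow_absVandermonde_le_mDiameter hB hM hs hsE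

lemma mDiameter_le_of_forall_absVandermonde_le {D : ℝ} (hD : 0 ≤ D) (hM : N + 1 ≤ M)
    (h : ∀ s : Fin M → Fin (N + 1) → K, Function.Injective s → (∀ i, s i ∈ E) →
      absVandermonde s ≤ D ^ M.choose (N + 1)) :
    mDiameter E M ≤ D := by
  refine Real.sSup_le ?_ hD
  rintro _ ⟨s, hs, hsE, rfl⟩
  rw [Real.rpow_inv_le_iff_of_pos (absVandermonde_nonneg _) hD
    (Nat.cast_pos.mpr (Nat.choose_pos hM)), Real.rpow_natCast]
  exact h s hs hsE

theorem mDiameter_succ_le {B : ℝ} (hB : ∀ x ∈ E, ‖x‖ ≤ B) (hM : N + 1 ≤ M) :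
    mDiameter E (M + 1) ≤ mDiameter E M := by
  set D := mDiameter E M
  refine mDiameter_le_of_forall_absVandermonde_le (mDiameter_nonneg E M) (by omega)
    fun s hs hsE => ?_
  have hfaces : absVandermonde s ^ (M - N) ≤ (D ^ (M + 1).choose (N + 1)) ^ (M - N) :=
    calc absVandermonde s ^ (M - N) = ∏ m : Fin (M + 1), absVandermonde (s ∘ m.succAbove) :=
          (prod_absVandermonde_comp_succAbove s).symm
      _ ≤ ∏ _m : Fin (M + 1), D ^ M.choose (N + 1) :=
          prod_le_prod (fun _ _ => absVandermonde_nonneg _) fun _ _ =>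
            absVandermonde_le_mDiameter_pow hB hM (hs.comp Fin.succAbove_right_injective)
              fun _ => hsE _
      _ = (D ^ (M + 1).choose (N + 1)) ^ (M - N) := by
          rw [prod_const, card_univ, Fintype.card_fin, ← pow_mul, ← pow_mul,
            Nat.choose_mul_succ_eq, Nat.add_sub_add_right]
  exact (pow_le_pow_iff_left₀ (absVandermonde_nonneg s) (pow_nonneg (mDiameter_nonneg E M) _)
    (by omega)).mp hfaces

end mDiameter

lemma exists_tendsto_of_succ_le_of_bddBelow {α : Type*} [ConditionallyCompleteLinearOrder α]
    [TopologicalSpace α] [OrderTopology α] {u : ℕ → α} {k : ℕ}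
    (hu : ∀ n, k ≤ n → u (n + 1) ≤ u n) (hb : BddBelow (Set.range u)) :
    ∃ L, Filter.Tendsto u Filter.atTop (nhds L) := by
  have hanti : Antitone fun n => u (n + k) :=
    antitone_nat_of_succ_le fun n => by simpa [add_right_comm] using hu (n + k) (by omega)
  have hb' : BddBelow (Set.range fun n => u (n + k)) :=
    hb.mono (Set.range_comp_subset_range _ u)
  exact ⟨_, (Filter.tendsto_add_atTop_iff_nat k).mp (tendsto_atTop_ciInf hanti hb')⟩

theorem stmt_14_general {K : Type*} [NormedField K] {N : ℕ}
    (E : Set (Fin (N + 1) → K))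
    (hbdd : ∃ B : ℝ, ∀ x ∈ E, ‖x‖ ≤ B) :
    (∀ M, N + 1 ≤ M → mDiameter E (M + 1) ≤ mDiameter E M) ∧
    ∃ L : ℝ, Filter.Tendsto (fun M => mDiameter E M) Filter.atTop (nhds L) := by
  obtain ⟨B, hB⟩ := hbdd
  have hmono : ∀ M, N + 1 ≤ M → mDiameter E (M + 1) ≤ mDiameter E M :=
    fun _ hM => mDiameter_succ_le hB hM
  exact ⟨hmono, exists_tendsto_of_succ_le_of_bddBelow hmono
    ⟨0, by rintro _ ⟨M, rfl⟩; exact mDiameter_nonneg E M⟩⟩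

/-- For an infinite bounded subset `E` of `K^{N+1}` over a non-archimedean field `K`, the
sequence `M ↦ d_M(E)` is monotone decreasing (for `M ≥ N+1`), and hence the homogeneous
transfinite diameter `d_∞(E) = lim_{M→∞} d_M(E)` exists. -/
theorem stmt_14 {K : Type*} [NormedField K] [IsUltrametricDist K] {N : ℕ}
    (E : Set (Fin (N + 1) → K)) (hE : E.Infinite)
    (hbdd : ∃ B : ℝ, ∀ x ∈ E, ‖x‖ ≤ B) :
    (∀ M, N + 1 ≤ M → mDiameter E (M + 1) ≤ mDiameter E M) ∧
    ∃ L : ℝ, Filter.Tendsto (fun M => mDiameter E M) Filter.atTop (nhds L) :=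
  stmt_14_general E hbdd
end

section
/- Let K be an algebraically closed field with a nontrivial non-archimedean absolute value, and let E = Γ(B(0,1)) be an ellipsoid in K^{N+1} with B(0,1) ⊆ E and homogeneous transfinite diameter d_∞(E) = 1. Then E = B(0,1). -/
open Matrix Polynomial IsUltrametricDist

open scoped Classical in
theorem card_filter_strictMono (k M : ℕ) :
    (Finset.univ.filter fun t : Fin k → Fin M => StrictMono t).card = M.choose k := by
  rw [← Fintype.card_subtype]
  have e : {t : Fin k → Fin M // StrictMono t} ≃ {s : Finset (Fin M) // s.card = k} :=
    { toFun := fun t => ⟨Finset.univ.image t.1, by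
        rw [Finset.card_image_of_injective _ t.2.injective, Finset.card_univ, Fintype.card_fin]⟩
      invFun := fun s => ⟨s.1.orderEmbOfFin s.2, (s.1.orderEmbOfFin s.2).strictMono⟩
      left_inv := fun t => Subtype.ext <| funext fun x =>
        (congrFun (Finset.orderEmbOfFin_unique _
          (fun y => Finset.mem_image_of_mem _ (Finset.mem_univ y)) t.2) x).symm
      right_inv := fun s => Subtype.ext <| Finset.coe_injective <| by
        rw [Finset.coe_image, Finset.coe_univ, Set.image_univ]
        exact Finset.range_orderEmbOfFin s.1 s.2 }
  rw [Fintype.card_congr e, Fintype.card_finset_len, Fintype.card_fin]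

section NormedField

variable {K : Type*} [NormedField K]

theorem norm_det_vandermonde_eq_one {n : ℕ} {b : Fin n → K}
    (hb : Pairwise fun i j => ‖b i - b j‖ = 1) : ‖(vandermonde b).det‖ = 1 := by
  rw [det_vandermonde, norm_prod]
  refine Finset.prod_eq_one fun i _ => ?_
  rw [norm_prod]
  exact Finset.prod_eq_one fun j hj => hb (Finset.mem_Ioi.mp hj).ne'

theorem absVandermonde_mulVec {N M : ℕ} (P : Matrix (Fin (N + 1)) (Fin (N + 1)) K)
    (v : Fin M → Fin (N + 1) → K) :
    absVandermonde (fun i => P *ᵥ v i) = ‖P.det‖ ^ M.choose (N + 1) * absVandermonde v := by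
  have hmat : ∀ t : Fin (N + 1) → Fin M, (Matrix.of fun i j => (P *ᵥ v (t j)) i) =
      P * Matrix.of fun i j => v (t j) i := fun t => by
    ext i j
    simp [Matrix.mul_apply, mulVec, dotProduct]
  unfold absVandermonde
  simp only [hmat, det_mul, norm_mul, Finset.prod_mul_distrib, Finset.prod_const,
    card_filter_strictMono]

theorem absVandermonde_moments_eq_one {N M : ℕ} {b : Fin M → K} (hb : ∀ i, ‖b i‖ = 1)
    (hbb : Pairwise fun i j => ‖b i - b j‖ = 1) :
    absVandermonde (fun i (j : Fin (N + 1)) => b i ^ ((j : ℕ) + 1)) = 1 := by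
  refine Finset.prod_eq_one fun t ht => ?_
  have htinj := (Finset.mem_filter.mp ht).2.injective
  have hmat : (Matrix.of fun (i j : Fin (N + 1)) => b (t j) ^ ((i : ℕ) + 1)) =
      (vandermonde (b ∘ t))ᵀ * diagonal (b ∘ t) := by
    ext i j
    simp [vandermonde, pow_succ]
  rw [hmat, det_mul, det_transpose, det_diagonal, norm_mul, norm_prod,
    norm_det_vandermonde_eq_one (b := b ∘ t) fun i j hij => hbb (htinj.ne hij)]
  simp [hb]

theorem absVandermonde_rpow_le_mDiameter {N M : ℕ} {E : Set (Fin (N + 1) → K)}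
    (hE : 0 < mDiameter E M) {s : Fin M → Fin (N + 1) → K} (hs : Function.Injective s)
    (hsE : ∀ i, s i ∈ E) : absVandermonde s ^ ((M.choose (N + 1) : ℝ)⁻¹) ≤ mDiameter E M := by
  unfold mDiameter at hE ⊢
  refine le_csSup ?_ ⟨s, hs, hsE, rfl⟩
  by_contra hbdd
  exact hE.ne' (Real.sSup_of_not_bddAbove hbdd)

variable [IsUltrametricDist K]

theorem norm_det_le_one_of_forall_norm_le_one {n : Type*} [Fintype n] [DecidableEq n]
    {A : Matrix n n K} (hA : ∀ i j, ‖A i j‖ ≤ 1) : ‖A.det‖ ≤ 1 := by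
  rw [det_apply]
  refine norm_sum_le_of_forall_le_of_nonneg zero_le_one fun σ _ => ?_
  rw [norm_units_zsmul, norm_prod]
  exact Finset.prod_le_one (fun _ _ => norm_nonneg _) fun i _ => hA _ _

theorem norm_adjugate_le_one_of_forall_norm_le_one {n : Type*} [Fintype n] [DecidableEq n]
    {A : Matrix n n K} (hA : ∀ i j, ‖A i j‖ ≤ 1) (i j : n) : ‖A.adjugate i j‖ ≤ 1 := by
  rw [adjugate_apply]
  refine norm_det_le_one_of_forall_norm_le_one fun k l => ?_
  rw [updateRow_apply]
  split_ifs
  · rw [Pi.single_apply]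
    split_ifs <;> simp
  · exact hA k l

theorem norm_entry_le_one_of_mul_eq_one {n : Type*} [Fintype n] [DecidableEq n]
    {P Q : Matrix n n K} (hPQ : P * Q = 1) (hQ : ∀ i j, ‖Q i j‖ ≤ 1) (hP : ‖P.det‖ ≤ 1)
    (i j : n) : ‖P i j‖ ≤ 1 := by
  have hdet : ‖P.det‖ * ‖Q.det‖ = 1 := by
    rw [← norm_mul, ← det_mul, hPQ, det_one, norm_one]
  have hQdet : ‖Q.det‖ = 1 := by
    nlinarith [norm_det_le_one_of_forall_norm_le_one hQ, norm_nonneg P.det, norm_nonneg Q.det]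
  rw [← inv_eq_left_inv hPQ, inv_def, Ring.inverse_eq_inv', Matrix.smul_apply, smul_eq_mul,
    norm_mul, norm_inv, hQdet, inv_one, one_mul]
  exact norm_adjugate_le_one_of_forall_norm_le_one hQ i j

theorem forall_norm_mulVec_le_one_iff {m n : Type*} [Fintype m] [Fintype n] [DecidableEq n]
    (A : Matrix m n K) : (∀ x : n → K, ‖x‖ ≤ 1 → ‖A *ᵥ x‖ ≤ 1) ↔ ∀ i j, ‖A i j‖ ≤ 1 := by
  constructor
  · intro hA i j
    have hcol := hA (Pi.single j 1) (by rw [Pi.norm_single, norm_one])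
    rw [mulVec_single_one] at hcol
    exact (norm_le_pi_norm (A.col j) i).trans hcol
  · intro hA x hx
    refine (pi_norm_le_iff_of_nonneg zero_le_one).2 fun i => ?_
    refine norm_sum_le_of_forall_le_of_nonneg zero_le_one fun j _ => ?_
    rw [norm_mul]
    exact mul_le_one₀ (hA i j) (norm_nonneg _) ((norm_le_pi_norm x j).trans hx)

variable [IsAlgClosed K]

theorem exists_forall_norm_sub_eq_one {s : Finset K} (hs : s.Nonempty)
    (h : ∀ c ∈ s, ‖c‖ ≤ 1) : ∃ x : K, ∀ c ∈ s, ‖x - c‖ = 1 := by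
  have hdeg : 0 < (∏ c ∈ s, (X - C c)).degree := by
    rw [degree_prod]
    simpa [degree_X_sub_C] using hs.card_pos
  obtain ⟨x, hx⟩ := IsAlgClosed.exists_root (∏ c ∈ s, (X - C c) - C 1)
    (by rw [degree_sub_C hdeg]; exact hdeg.ne')
  have hprod : ∏ c ∈ s, (x - c) = 1 := by
    simpa [eval_prod, sub_eq_zero] using hx
  have hx_le : ‖x‖ ≤ 1 := by
    by_contra! hx_gt
    have hfactor : ∀ c ∈ s, ‖x‖ ≤ ‖x - c‖ := fun c hc => by
      have := norm_add_le_max (x - c) c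
      rw [sub_add_cancel] at this
      exact (le_max_iff.mp this).resolve_right ((h c hc).trans_lt hx_gt).not_ge
    have : ‖x‖ ^ s.card ≤ 1 := calc
      ‖x‖ ^ s.card = ∏ c ∈ s, ‖x‖ := (Finset.prod_const _).symm
      _ ≤ ∏ c ∈ s, ‖x - c‖ := Finset.prod_le_prod (fun _ _ => norm_nonneg _) hfactor
      _ = 1 := by rw [← norm_prod, hprod, norm_one]
    exact this.not_gt (one_lt_pow₀ hx_gt hs.card_pos.ne')
  have hfactor_le : ∀ c ∈ s, ‖x - c‖₊ ≤ 1 := fun c hc => by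
    rw [sub_eq_add_neg, ← NNReal.coe_le_one]
    exact (norm_add_le_max _ _).trans (max_le hx_le (by simpa using h c hc))
  have hnnprod : ∏ c ∈ s, ‖x - c‖₊ = 1 := by rw [← nnnorm_prod, hprod, nnnorm_one]
  exact ⟨x, fun c hc => congrArg NNReal.toReal
    ((Finset.prod_eq_one_iff_of_le_one' hfactor_le).mp hnnprod c hc)⟩

theorem exists_pairwise_norm_sub_eq_one (M : ℕ) :
    ∃ b : Fin M → K, (∀ i, ‖b i‖ = 1) ∧ Pairwise fun i j => ‖b i - b j‖ = 1 := by
  classical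
  induction M with
  | zero => exact ⟨finZeroElim, finZeroElim, fun i => i.elim0⟩
  | succ M ih =>
    obtain ⟨b, hb, hbb⟩ := ih
    obtain ⟨x, hx⟩ := exists_forall_norm_sub_eq_one
      (Finset.insert_nonempty 0 (Finset.univ.image b)) (by simp [hb])
    have hx0 : ‖x‖ = 1 := by simpa using hx 0 (by simp)
    have hxb : ∀ i, ‖x - b i‖ = 1 := fun i => hx _ (by simp)
    refine ⟨Fin.cons x b, Fin.cases hx0 hb, ?_⟩
    intro i j hij
    cases i using Fin.cases <;> cases j using Fin.cases
    · exact absurd rfl hij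
    · simpa using hxb _
    · simpa [norm_sub_rev] using hxb _
    · simpa using hbb (fun h => hij (congrArg Fin.succ h))

theorem exists_injective_absVandermonde_eq_one (N M : ℕ) :
    ∃ v : Fin M → Fin (N + 1) → K,
      Function.Injective v ∧ (∀ i, ‖v i‖ ≤ 1) ∧ absVandermonde v = 1 := by
  obtain ⟨b, hb, hbb⟩ := exists_pairwise_norm_sub_eq_one (K := K) M
  refine ⟨fun i j => b i ^ ((j : ℕ) + 1), fun i j hij => ?_, fun i => ?_,
    absVandermonde_moments_eq_one hb hbb⟩
  · by_contra hne
    have hbij : b i = b j := by simpa using congrFun hij 0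
    simpa [hbij] using hbb hne
  · refine (pi_norm_le_iff_of_nonneg zero_le_one).2 fun j => ?_
    simp [hb]

theorem norm_det_le_mDiameter {N M : ℕ} (hM : N + 1 ≤ M) {E : Set (Fin (N + 1) → K)}
    (hE : 0 < mDiameter E M) {P : Matrix (Fin (N + 1)) (Fin (N + 1)) K}
    (hP : Function.Injective P.mulVec) (hPE : ∀ x, ‖x‖ ≤ 1 → P *ᵥ x ∈ E) :
    ‖P.det‖ ≤ mDiameter E M := by
  obtain ⟨v, hv_inj, hv_norm, hv_one⟩ := exists_injective_absVandermonde_eq_one (K := K) N M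
  have hC : (M.choose (N + 1) : ℝ) ≠ 0 := by exact_mod_cast (Nat.choose_pos hM).ne'
  calc ‖P.det‖ = absVandermonde (fun i => P *ᵥ v i) ^ ((M.choose (N + 1) : ℝ)⁻¹) := by
        rw [absVandermonde_mulVec, hv_one, mul_one, ← Real.rpow_natCast,
          ← Real.rpow_mul (norm_nonneg _), mul_inv_cancel₀ hC, Real.rpow_one]
    _ ≤ mDiameter E M :=
        absVandermonde_rpow_le_mDiameter hE (hP.comp hv_inj) fun i => hPE _ (hv_norm i)

end NormedField

/-- Let `K` be an algebraically closed field with a nontrivial non-archimedean absolute value,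
and let `E = Γ(B(0,1))` be an ellipsoid in `K^{N+1}` (`Γ ∈ GL_{N+1}(K)`) with `B(0,1) ⊆ E` and
homogeneous transfinite diameter `d_∞(E) = 1` (the sequence `d_M(E)` converges to `1`).
Then `E = B(0,1)`. -/
theorem stmt_19 {K : Type*} [NontriviallyNormedField K] [IsUltrametricDist K] [IsAlgClosed K]
    {N : ℕ} (Γ : (Fin (N + 1) → K) ≃ₗ[K] (Fin (N + 1) → K))
    (E : Set (Fin (N + 1) → K))
    (hE : E = (fun x => Γ x) '' {x : Fin (N + 1) → K | ‖x‖ ≤ 1})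
    (hsub : {x : Fin (N + 1) → K | ‖x‖ ≤ 1} ⊆ E)
    (hdiam : Filter.Tendsto (fun M => mDiameter E M) Filter.atTop (nhds 1)) :
    E = {x : Fin (N + 1) → K | ‖x‖ ≤ 1} := by
  set P := LinearMap.toMatrix' Γ.toLinearMap
  set Q := LinearMap.toMatrix' Γ.symm.toLinearMap
  have hP : ∀ x, Γ x = P *ᵥ x := fun x => (LinearMap.toMatrix'_mulVec _ x).symm
  have hQ : ∀ x, Γ.symm x = Q *ᵥ x := fun x => (LinearMap.toMatrix'_mulVec _ x).symm
  have hPQ : P * Q = 1 := by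
    rw [← LinearMap.toMatrix'_comp, ← LinearEquiv.coe_trans, LinearEquiv.symm_trans_self,
      LinearEquiv.refl_toLinearMap, LinearMap.toMatrix'_id]
  have hQ_le : ∀ i j, ‖Q i j‖ ≤ 1 := (forall_norm_mulVec_le_one_iff Q).1 fun x hx => by
    obtain ⟨y, hy, rfl⟩ := hE ▸ hsub hx
    simpa [← hQ] using hy
  have hdetP : ‖P.det‖ ≤ 1 := by
    refine ge_of_tendsto hdiam ?_
    filter_upwards [hdiam.eventually (lt_mem_nhds one_pos), Filter.eventually_ge_atTop (N + 1)]
      with M hpos hM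
    refine norm_det_le_mDiameter hM hpos (fun x y hxy => Γ.injective ?_) fun x hx => ?_
    · rwa [hP, hP]
    · exact hE ▸ ⟨x, hx, hP x⟩
  refine (Set.Subset.antisymm ?_ hsub)
  rw [hE]
  rintro _ ⟨x, hx, rfl⟩
  change ‖Γ x‖ ≤ 1
  rw [hP]
  exact (forall_norm_mulVec_le_one_iff P).2 (norm_entry_le_one_of_mul_eq_one hPQ hQ_le hdetP) x hx
end
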